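/- For every integer r ≥ 3, every maximum matching M of the graph G_{2r+1} saturates the three vertices x, y and z, and leaves exactly 2r − 2 vertices unsaturated (equivalently, every maximum matching of G_{2r+1} has exactly 2r + 4 edges). -/

import Mathlib

/-- A matching `M` of `G` is maximum if no matching of `G` has more edges. -/
def SimpleGraph.IsMaximumMatching {α : Type*} (G : SimpleGraph α) (M : G.Subgraph) : Prop :=
  M.IsMatching ∧ ∀ M' : G.Subgraph, M'.IsMatching → M'.edgeSet.ncard ≤ M.edgeSet.ncard

/-- The (underlying simple) graph `G_n` of the paper (used with `n = 2r + 1`):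
the vertices `x, y, z` are encoded as `Sum.inl 0, Sum.inl 1, Sum.inl 2`, the vertex
`v_{k+1}^{(i)}` is encoded as `Sum.inr (k, i)`; `x` is joined to every `v_1^{(i)}`,
`y` to every `v_2^{(i)}`, `z` to every `v_3^{(i)}`, and for each `i` the vertices
`v_1^{(i)}, v_2^{(i)}, v_3^{(i)}` form a triangle. -/
def GGraph (n : ℕ) : SimpleGraph (Fin 3 ⊕ Fin 3 × Fin n) where
  Adj a b :=
    match a, b with
    | .inl k, .inr p => p.1 = k
    | .inr p, .inl k => p.1 = k
    | .inr p, .inr q => p.2 = q.2 ∧ p.1 ≠ q.1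
    | _, _ => False
  symm := by
    constructor
    rintro (k | p) (k' | q) h
    · exact h
    · exact h
    · exact h
    · exact ⟨h.1.symm, h.2.symm⟩
  loopless := by
    constructor
    rintro (k | p) h
    · exact h
    · exact h.2 rfl

/-!
Label an edge of `G_n` by the hub `x`, `y` or `z` it contains, or else by the triangle it lies in.
Two edges of a matching never share a label: a hub lies on at most one of them, and any two
edges inside a triangle meet. So a matching has at most `n + 3` edges, and at most `n + 2` if it
misses a hub. For `n ≥ 3` the bound is attained by matching `x`, `y`, `z` into three different
triangles and adding, in every triangle, an edge that avoids the vertex already used. A maximum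
matching therefore covers `2n + 6` of the `3n + 3` vertices.
-/

open SimpleGraph

namespace SimpleGraph.Subgraph.IsMatching

variable {V : Type*} {G : SimpleGraph V} {M : G.Subgraph}

lemma eq_of_mem_of_mem (hM : M.IsMatching) {e e' : Sym2 V} (he : e ∈ M.edgeSet)
    (he' : e' ∈ M.edgeSet) {v : V} (hv : v ∈ e) (hv' : v ∈ e') : e = e' := by
  obtain ⟨w, rfl⟩ := Sym2.mem_iff_exists.mp hv
  obtain ⟨w', rfl⟩ := Sym2.mem_iff_exists.mp hv'
  rw [hM.eq_of_adj_left (M.mem_edgeSet.mp he) (M.mem_edgeSet.mp he')]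

lemma ncard_verts [Finite V] (hM : M.IsMatching) : M.verts.ncard = 2 * M.edgeSet.ncard := by
  have := Fintype.ofFinite M.edgeSet
  have fiber (e : M.edgeSet) : Nat.card {v // hM.toEdge v = e} = 2 := by
    obtain ⟨e, he⟩ := e
    induction e using Sym2.ind with
    | _ v w =>
      change Nat.card (hM.toEdge ⁻¹' {⟨s(v, w), he⟩}) = 2
      rw [hM.toEdge_preimage_singleton he, Nat.card_coe_set_eq, Set.ncard_pair]
      simpa using (M.adj_sub he).ne
  rw [← Nat.card_coe_set_eq, ← Nat.card_coe_set_eq,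
    Nat.card_congr (Equiv.sigmaFiberEquiv hM.toEdge).symm, Nat.card_sigma]
  simp [fiber, Nat.card_eq_fintype_card, mul_comm]

lemma ncard_setOf_forall_not_adj [Finite V] (hM : M.IsMatching) :
    {v | ∀ w, ¬ M.Adj v w}.ncard = Nat.card V - 2 * M.edgeSet.ncard := by
  have : {v | ∀ w, ¬ M.Adj v w} = M.vertsᶜ := by
    rw [← hM.support_eq_verts]
    ext v
    simp [Subgraph.mem_support]
  rw [this, Set.ncard_compl, hM.ncard_verts]

end SimpleGraph.Subgraph.IsMatching

namespace GGraph

variable {n : ℕ} {M : (GGraph n).Subgraph}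

/-- Hubs come before triangles, so an edge is labelled by the smallest part it meets. -/
def part : Fin 3 ⊕ Fin 3 × Fin n → Fin 3 ⊕ₗ Fin n
  | .inl k => toLex (.inl k)
  | .inr p => toLex (.inr p.2)

def edgePart : Sym2 (Fin 3 ⊕ Fin 3 × Fin n) → Fin 3 ⊕ₗ Fin n :=
  Sym2.lift ⟨fun a b => part a ⊓ part b, fun a b => inf_comm (part a) (part b)⟩

@[simp]
lemma edgePart_mk (a b : Fin 3 ⊕ Fin 3 × Fin n) : edgePart s(a, b) = part a ⊓ part b :=
  Sym2.lift_mk ..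

lemma mem_of_edgePart_eq_inl {e : Sym2 (Fin 3 ⊕ Fin 3 × Fin n)} {k : Fin 3}
    (h : edgePart e = toLex (.inl k)) : .inl k ∈ e := by
  have part_eq_inl : ∀ v : Fin 3 ⊕ Fin 3 × Fin n, part v = toLex (.inl k) → v = .inl k := by
    rintro (k' | p) hv <;> simp_all [part]
  induction e using Sym2.ind with
  | _ a b =>
    rw [edgePart_mk] at h
    rcases le_total (part a) (part b) with hab | hab
    · rw [inf_eq_left.mpr hab] at h
      exact part_eq_inl a h ▸ Sym2.mem_mk_left a b
    · rw [inf_eq_right.mpr hab] at h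
      exact part_eq_inl b h ▸ Sym2.mem_mk_right a b

lemma exists_eq_of_edgePart_eq_inr {e : Sym2 (Fin 3 ⊕ Fin 3 × Fin n)}
    (he : e ∈ (GGraph n).edgeSet) {i : Fin n} (h : edgePart e = toLex (.inr i)) :
    ∃ p q : Fin 3, p ≠ q ∧ e = s(.inr (p, i), .inr (q, i)) := by
  induction e using Sym2.ind with
  | _ a b =>
    rcases a with k | ⟨p, j⟩ <;> rcases b with k' | ⟨q, j'⟩
    · exact he.elim
    · simp [part] at h
    · simp [part] at h
    · obtain ⟨rfl, hpq⟩ : j = j' ∧ p ≠ q := he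
      obtain rfl : j = i := by simpa [part] using h
      exact ⟨p, q, hpq, rfl⟩

lemma injOn_edgePart (hM : M.IsMatching) : Set.InjOn edgePart M.edgeSet := by
  intro e he e' he' hee'
  obtain ⟨k | i, hl⟩ := toLex.surjective (edgePart e)
  · exact hM.eq_of_mem_of_mem he he' (mem_of_edgePart_eq_inl hl.symm)
      (mem_of_edgePart_eq_inl (hee' ▸ hl.symm))
  · obtain ⟨p, q, hpq, rfl⟩ := exists_eq_of_edgePart_eq_inr (M.edgeSet_subset he) hl.symm
    obtain ⟨p', q', hpq', rfl⟩ :=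
      exists_eq_of_edgePart_eq_inr (M.edgeSet_subset he') (hee' ▸ hl.symm)
    have two_pairs_meet : ∀ p q p' q' : Fin 3, p ≠ q → p' ≠ q' →
        ∃ c, (c = p ∨ c = q) ∧ (c = p' ∨ c = q') := by decide
    obtain ⟨c, hc, hc'⟩ := two_pairs_meet p q p' q' hpq hpq'
    exact hM.eq_of_mem_of_mem he he' (v := .inr (c, i)) (Sym2.mem_iff.mpr (by simpa using hc))
      (Sym2.mem_iff.mpr (by simpa using hc'))

lemma ncard_edgeSet_le (hM : M.IsMatching) : M.edgeSet.ncard ≤ n + 3 := by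
  simpa [Nat.card_eq_fintype_card, Fintype.card_lex, add_comm] using
    Set.ncard_le_ncard_of_injOn edgePart (fun e _ => Set.mem_univ _) (injOn_edgePart hM)

lemma ncard_edgeSet_le_of_forall_not_adj (hM : M.IsMatching) {k : Fin 3}
    (hk : ∀ b, ¬ M.Adj (.inl k) b) : M.edgeSet.ncard ≤ n + 2 := by
  have hmaps : Set.MapsTo edgePart M.edgeSet {toLex (.inl k)}ᶜ := by
    intro e he hek
    obtain ⟨b, rfl⟩ := Sym2.mem_iff_exists.mp (mem_of_edgePart_eq_inl hek)
    exact hk b he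
  have := Set.ncard_le_ncard_of_injOn edgePart hmaps (injOn_edgePart hM)
  rw [Set.ncard_compl, Set.ncard_singleton, Nat.card_eq_fintype_card, Fintype.card_lex,
    Fintype.card_sum, Fintype.card_fin, Fintype.card_fin] at this
  omega

def pairIndex : Fin 3 ⊕ Fin 3 × Fin n → Fin 3 ⊕ Fin n
  | .inl k => .inl k
  | .inr (k, i) => if (i : ℕ) = k then .inl k else .inr i

/-- The hub `Sum.inl k` is matched to `Sum.inr (k, k)`; the triangle `i` contributes the edge
avoiding `Sum.inr (i mod 3, i)`, which for `i < 3` is the vertex matched to a hub. -/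
def matchedPair (h : 3 ≤ n) :
    Fin 3 ⊕ Fin n → (Fin 3 ⊕ Fin 3 × Fin n) × (Fin 3 ⊕ Fin 3 × Fin n)
  | .inl k => (.inl k, .inr (k, Fin.castLE h k))
  | .inr i => (.inr (Fin.ofNat 3 (i + 1), i), .inr (Fin.ofNat 3 (i + 2), i))

section Construction

variable (h : 3 ≤ n)

lemma adj_matchedPair (l : Fin 3 ⊕ Fin n) :
    (GGraph n).Adj (matchedPair h l).1 (matchedPair h l).2 := by
  rcases l with k | i
  · exact rfl
  · refine ⟨rfl, fun hi => ?_⟩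
    have := congrArg Fin.val hi
    simp only [Fin.val_ofNat] at this
    omega

lemma pairIndex_eq_of_mem_matchedPair {l : Fin 3 ⊕ Fin n} {v : Fin 3 ⊕ Fin 3 × Fin n}
    (hv : v = (matchedPair h l).1 ∨ v = (matchedPair h l).2) : pairIndex v = l := by
  rcases l with k | i <;> rcases hv with rfl | rfl
  · rfl
  · simp [pairIndex, matchedPair]
  all_goals
    simp only [pairIndex, matchedPair, Fin.val_ofNat, ite_eq_right_iff, reduceCtorEq, imp_false]
    omega

def matching : (GGraph n).Subgraph :=
  ⨆ l, (GGraph n).subgraphOfAdj (adj_matchedPair h l)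

lemma isMatching_matching : (matching h).IsMatching := by
  refine Subgraph.IsMatching.iSup (fun l => .subgraphOfAdj _) fun l l' hll' => ?_
  dsimp only
  rw [support_subgraphOfAdj, support_subgraphOfAdj, Set.disjoint_left]
  exact fun v hv hv' => hll' <|
    (pairIndex_eq_of_mem_matchedPair h hv).symm.trans (pairIndex_eq_of_mem_matchedPair h hv')

lemma ncard_edgeSet_matching : (matching h).edgeSet.ncard = n + 3 := by
  have injective : Function.Injective fun l => s((matchedPair h l).1, (matchedPair h l).2) := by
    intro l l' hll'
    dsimp only at hll'
    have hv := Sym2.mem_iff.mp (hll' ▸ Sym2.mem_mk_left (matchedPair h l).1 (matchedPair h l).2)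
    exact (pairIndex_eq_of_mem_matchedPair h (.inl rfl)).symm.trans
      (pairIndex_eq_of_mem_matchedPair h hv)
  simp only [matching, Subgraph.edgeSet_iSup, edgeSet_subgraphOfAdj, Set.iUnion_singleton_eq_range]
  rw [Set.ncard_range_of_injective injective, Nat.card_sum, Nat.card_eq_fintype_card,
    Nat.card_eq_fintype_card, Fintype.card_fin, Fintype.card_fin, add_comm]

end Construction

lemma ncard_edgeSet_of_isMaximumMatching (h : 3 ≤ n) (hM : (GGraph n).IsMaximumMatching M) :
    M.edgeSet.ncard = n + 3 :=
  (ncard_edgeSet_le hM.1).antisymm (ncard_edgeSet_matching h ▸ hM.2 _ (isMatching_matching h))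

lemma exists_adj_inl_of_isMaximumMatching (h : 3 ≤ n) (hM : (GGraph n).IsMaximumMatching M)
    (k : Fin 3) : ∃ b, M.Adj (.inl k) b := by
  by_contra! hk
  have := ncard_edgeSet_le_of_forall_not_adj hM.1 hk
  rw [ncard_edgeSet_of_isMaximumMatching h hM] at this
  omega

end GGraph

/-- Every maximum matching `M` of `G_{2r+1}` saturates `x`, `y` and `z`, leaves exactly
`2r - 2` vertices unsaturated, and has exactly `2r + 4` edges. -/
theorem stmt_8 (r : ℕ) (hr : 3 ≤ r) (M : (GGraph (2 * r + 1)).Subgraph)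
    (hM : (GGraph (2 * r + 1)).IsMaximumMatching M) :
    (∀ k : Fin 3, ∃ b, M.Adj (Sum.inl k) b) ∧
    {a : Fin 3 ⊕ Fin 3 × Fin (2 * r + 1) | ∀ b, ¬ M.Adj a b}.ncard = 2 * r - 2 ∧
    M.edgeSet.ncard = 2 * r + 4 := by
  have hn : 3 ≤ 2 * r + 1 := by omega
  have hcard := GGraph.ncard_edgeSet_of_isMaximumMatching hn hM
  refine ⟨GGraph.exists_adj_inl_of_isMaximumMatching hn hM, ?_, hcard⟩
  rw [hM.1.ncard_setOf_forall_not_adj, hcard, Nat.card_sum, Nat.card_prod]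
  simp only [Nat.card_eq_fintype_card, Fintype.card_fin]
  omega
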